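/- arXiv:1804.08179 — 3 statements merged into one kernel-verified Lean document; each statement's English description precedes it below -/
import Mathlib

section
/- For every odd integer m ≥ 3 and every real r > 1, the integral ∫₀^{2π} φ(r cos θ) cos(mθ) dθ equals (4/(m(m²−1)))·( m·√(r²−1)·cos(m·arctan(√(r²−1))) − sin(m·arctan(√(r²−1))) ). -/
/-!
Since `phi` is odd and `m` is odd, the integrand is invariant under `θ ↦ 2π - θ` and
`θ ↦ π - θ`, so the integral is four times the integral over `[0, π/2]`. With
`α = arctan √(r² - 1)`, i.e. `r cos α = 1`, the integrand there is `cos (mθ)` on `[0, α]` and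
`r cos θ cos (mθ)` on `[α, π/2]`; both integrate in closed form, and the boundary terms at `π/2`
vanish because `m ± 1` is even.
-/

open Real

/-- The continuous piecewise linear saturation function. -/
noncomputable def phi (s : ℝ) : ℝ := if s < -1 then -1 else if s ≤ 1 then s else 1

open intervalIntegral
open MeasureTheory (volume)

lemma phi_neg (s : ℝ) : phi (-s) = -phi s := by
  unfold phi; split_ifs <;> linarith

lemma phi_of_one_le {s : ℝ} (h : 1 ≤ s) : phi s = 1 := by
  unfold phi; split_ifs <;> linarith

lemma phi_of_mem_Icc {s : ℝ} (h : s ∈ Set.Icc (-1) 1) : phi s = s := by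
  unfold phi; split_ifs <;> linarith [h.1, h.2]

@[fun_prop]
lemma continuous_phi : Continuous phi := by
  have : phi = fun s => max (-1) (min s 1) := by
    funext s; unfold phi; rw [min_def, max_def]; split_ifs <;> linarith
  rw [this]
  fun_prop

theorem intervalIntegral.integral_zero_two_mul_eq_two_nsmul_of_symm {E : Type*}
    [NormedAddCommGroup E] [NormedSpace ℝ E] {f : ℝ → E} {a : ℝ}
    (hf : IntervalIntegrable f volume 0 a) (hsymm : ∀ x, f (2 * a - x) = f x) :
    ∫ x in 0..2 * a, f x = 2 • ∫ x in 0..a, f x := by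
  have hreflect : (fun x => f (2 * a - x)) = f := funext hsymm
  have h2a : 2 * a - a = a := by ring
  have hf' : IntervalIntegrable f volume (2 * a) a := by
    have := hf.comp_sub_left (2 * a)
    rwa [hreflect, sub_zero, h2a] at this
  have hupper : ∫ x in a..2 * a, f x = ∫ x in 0..a, f x := by
    have := integral_comp_sub_left f (a := 0) (b := a) (2 * a)
    rw [hreflect, sub_zero, h2a] at this
    exact this.symm
  rw [← integral_add_adjacent_intervals hf hf'.symm, hupper, two_nsmul]

lemma integral_cos_mul {c : ℝ} (hc : c ≠ 0) (a b : ℝ) :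
    ∫ x in a..b, cos (c * x) = (sin (c * b) - sin (c * a)) / c := by
  rw [integral_comp_mul_left (fun x => cos x) hc, integral_cos, smul_eq_mul, inv_mul_eq_div]

lemma phi_mul_cos_two_pi_sub (r : ℝ) (m : ℕ) (θ : ℝ) :
    phi (r * cos (2 * π - θ)) * cos (m * (2 * π - θ)) = phi (r * cos θ) * cos (m * θ) := by
  rw [cos_two_pi_sub, mul_sub, cos_nat_mul_two_pi_sub]

lemma phi_mul_cos_pi_sub (r : ℝ) {m : ℕ} (hm : Odd m) (θ : ℝ) :
    phi (r * cos (π - θ)) * cos (m * (π - θ)) = phi (r * cos θ) * cos (m * θ) := by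
  rw [cos_pi_sub, mul_sub, cos_nat_mul_pi_sub, hm.neg_one_pow, mul_neg, phi_neg]
  ring

lemma integral_phi_mul_cos_split {r α : ℝ} (hα0 : 0 ≤ α) (hα : α ≤ π / 2) (hrα : r * cos α = 1)
    (m : ℕ) :
    ∫ θ in 0..π / 2, phi (r * cos θ) * cos (m * θ) =
      (∫ θ in 0..α, cos (m * θ)) + r * ∫ θ in α..π / 2, cos θ * cos (m * θ) := by
  have hcosα : 0 ≤ cos α := cos_nonneg_of_mem_Icc ⟨by linarith [pi_pos], hα⟩
  have hr : 0 ≤ r := by nlinarith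
  have hg : Continuous fun θ => phi (r * cos θ) * cos (m * θ) := by fun_prop
  rw [← integral_add_adjacent_intervals (hg.intervalIntegrable 0 α) (hg.intervalIntegrable α _),
    ← integral_const_mul]
  congr 1
  · refine integral_congr fun θ hθ => ?_
    rw [Set.uIcc_of_le hα0] at hθ
    have hge : r * cos α ≤ r * cos θ := mul_le_mul_of_nonneg_left
      (cos_le_cos_of_nonneg_of_le_pi hθ.1 (by linarith [pi_pos]) hθ.2) hr
    rw [phi_of_one_le (hrα ▸ hge), one_mul]
  · refine integral_congr fun θ hθ => ?_
    obtain ⟨hαθ, hθ⟩ := Set.uIcc_of_le hα ▸ hθ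
    have hle : r * cos θ ≤ r * cos α := mul_le_mul_of_nonneg_left
      (cos_le_cos_of_nonneg_of_le_pi hα0 (by linarith [pi_pos]) hαθ) hr
    have hnonneg : 0 ≤ r * cos θ :=
      mul_nonneg hr (cos_nonneg_of_mem_Icc ⟨by linarith [pi_pos], hθ⟩)
    rw [phi_of_mem_Icc (⟨by linarith, by linarith⟩ : r * cos θ ∈ Set.Icc (-1) 1), mul_assoc]

lemma sin_mul_pi_div_two_of_even {n : ℕ} (hn : Even n) : sin (n * (π / 2)) = 0 := by
  obtain ⟨j, rfl⟩ := hn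
  rw [show ((j + j : ℕ) : ℝ) * (π / 2) = j * π by push_cast; ring, sin_nat_mul_pi]

lemma integral_cos_mul_cos_of_odd {m : ℕ} (hm : Odd m) (hm1 : m ≠ 1) (α : ℝ) :
    ∫ θ in α..π / 2, cos θ * cos (m * θ) =
      -(sin ((m + 1) * α) / (m + 1) + sin ((m - 1) * α) / (m - 1)) / 2 := by
  have hprod : ∀ θ, cos θ * cos (m * θ) = (cos ((m + 1) * θ) + cos ((m - 1) * θ)) / 2 := by
    intro θ; rw [add_mul, sub_mul, one_mul, cos_add, cos_sub]; ring
  have hsucc : (m : ℝ) + 1 ≠ 0 := by positivity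
  have hpred : (m : ℝ) - 1 ≠ 0 := sub_ne_zero.mpr (by exact_mod_cast hm1)
  have hsin_succ : sin ((m + 1) * (π / 2)) = 0 := by
    exact_mod_cast sin_mul_pi_div_two_of_even hm.add_one
  have hsin_pred : sin ((m - 1) * (π / 2)) = 0 := by
    have := sin_mul_pi_div_two_of_even (Nat.Odd.sub_odd hm odd_one)
    rwa [Nat.cast_pred hm.pos] at this
  simp_rw [hprod]
  rw [integral_div, integral_add ((by fun_prop : Continuous _).intervalIntegrable _ _)
      ((by fun_prop : Continuous _).intervalIntegrable _ _),
    integral_cos_mul hsucc, integral_cos_mul hpred, hsin_succ, hsin_pred]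
  ring

theorem Im_eq_Lm (m : ℕ) (hm : Odd m) (hm3 : 3 ≤ m) (r : ℝ) (hr : 1 < r) :
    ∫ θ in (0:ℝ)..(2 * π), phi (r * Real.cos θ) * Real.cos ((m:ℝ) * θ) =
      (4 / ((m:ℝ) * ((m:ℝ) ^ 2 - 1))) *
        ((m:ℝ) * Real.sqrt (r ^ 2 - 1) *
            Real.cos ((m:ℝ) * Real.arctan (Real.sqrt (r ^ 2 - 1))) -
          Real.sin ((m:ℝ) * Real.arctan (Real.sqrt (r ^ 2 - 1)))) := by
  set s := √(r ^ 2 - 1)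
  set α := arctan s
  have hr0 : 0 < r := by linarith
  have hsqrt : √(1 + s ^ 2) = r := by
    rw [sq_sqrt (by nlinarith), add_sub_cancel, sqrt_sq hr0.le]
  have hcos : cos α = 1 / r := by rw [cos_arctan, hsqrt]
  have hsin : sin α = s / r := by rw [sin_arctan, hsqrt]
  have hrα : r * cos α = 1 := by rw [hcos]; field_simp
  have hα0 : 0 ≤ α := arctan_nonneg.mpr (sqrt_nonneg _)
  have hα : α ≤ π / 2 := (arctan_lt_pi_div_two s).le
  have hm3' : (3 : ℝ) ≤ m := by exact_mod_cast hm3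
  have hm0 : (m : ℝ) ≠ 0 := by linarith
  have hpred : (m : ℝ) - 1 ≠ 0 := by linarith
  have hsq : (m : ℝ) ^ 2 - 1 ≠ 0 := by nlinarith
  have hg : Continuous fun θ => phi (r * cos θ) * cos (m * θ) := by fun_prop
  have hhalf := integral_zero_two_mul_eq_two_nsmul_of_symm (hg.intervalIntegrable 0 (π / 2))
    fun θ => by rw [mul_div_cancel₀ π two_ne_zero]; exact phi_mul_cos_pi_sub r hm θ
  rw [mul_div_cancel₀ π two_ne_zero] at hhalf
  rw [integral_zero_two_mul_eq_two_nsmul_of_symm (hg.intervalIntegrable 0 π)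
      (phi_mul_cos_two_pi_sub r m), hhalf, integral_phi_mul_cos_split hα0 hα hrα,
    integral_cos_mul hm0, integral_cos_mul_cos_of_odd hm (by omega), mul_zero, sin_zero, sub_zero,
    add_mul, sub_mul, one_mul, sin_add, sin_sub, hcos, hsin]
  simp only [nsmul_eq_mul]
  field_simp
  ring
end

section
/- The function r ↦ K(r)/r is strictly decreasing on the interval (1, ∞) (indeed r·K′(r) − K(r) = −4√(r²−1)/r < 0 there); consequently, for every real λ the equation K(r) = λ·r has at most one solution r in (1, ∞). -/
open Real Set

/-- The function `K(r) = π r + (2/r)√(r²−1) − 2r·arctan(√(r²−1))`. -/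
noncomputable def K (r : ℝ) : ℝ :=
  π * r + (2 / r) * Real.sqrt (r ^ 2 - 1) - 2 * r * Real.arctan (Real.sqrt (r ^ 2 - 1))

/-- The derivative `K′(r) = π − 2√(r²−1)/r² − 2·arctan(√(r²−1))` of `K`. -/
noncomputable def K' (r : ℝ) : ℝ :=
  π - 2 * Real.sqrt (r ^ 2 - 1) / r ^ 2 - 2 * Real.arctan (Real.sqrt (r ^ 2 - 1))

/-! By the quotient rule, `(K r / r)' = (r K'(r) − K(r)) / r²`, and in `r K'(r) − K(r)` the
`π` and `arctan` terms cancel, leaving `−4√(r²−1)/r`, which is negative for `r > 1`. A strictly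
decreasing `K r / r` takes the value `λ` at most once, i.e. `K r = λ r` has at most one root. -/

lemma sqrt_sq_sub_one_pos {r : ℝ} (hr : 1 < r) : 0 < √(r ^ 2 - 1) :=
  Real.sqrt_pos.2 (by nlinarith)

lemma hasDerivAt_sqrt_sq_sub_one {r : ℝ} (hr : 1 < r) :
    HasDerivAt (fun x : ℝ => √(x ^ 2 - 1)) (r / √(r ^ 2 - 1)) r := by
  refine (((hasDerivAt_pow 2 r).sub_const 1).sqrt (by nlinarith)).congr_deriv ?_
  norm_num [mul_div_mul_left]

lemma hasDerivAt_K {r : ℝ} (hr : 1 < r) : HasDerivAt K (K' r) r := by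
  have hr0 : r ≠ 0 := by positivity
  set s := √(r ^ 2 - 1) with hs
  have hs0 : s ≠ 0 := (sqrt_sq_sub_one_pos hr).ne'
  have hsq : s ^ 2 = r ^ 2 - 1 := Real.sq_sqrt (by nlinarith)
  have hsqrt := hasDerivAt_sqrt_sq_sub_one hr
  have h := (((hasDerivAt_id r).const_mul π).add
    (((hasDerivAt_id r).inv hr0).const_mul 2 |>.mul hsqrt)).sub
    (((hasDerivAt_id r).const_mul 2).mul hsqrt.arctan)
  refine h.congr_deriv ?_
  simp only [K', id_eq, Pi.inv_apply, ← hs, hsq]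
  field_simp
  ring

lemma mul_K'_sub_K (r : ℝ) : r * K' r - K r = -4 * √(r ^ 2 - 1) / r := by
  rcases eq_or_ne r 0 with rfl | hr
  · simp [K]
  · simp only [K, K']
    field_simp
    ring

lemma mul_K'_sub_K_neg {r : ℝ} (hr : 1 < r) : r * K' r - K r < 0 := by
  rw [mul_K'_sub_K]
  exact div_neg_of_neg_of_pos (by linarith [sqrt_sq_sub_one_pos hr]) (by linarith)

lemma hasDerivAt_K_div {r : ℝ} (hr : 1 < r) :
    HasDerivAt (fun x => K x / x) ((r * K' r - K r) / r ^ 2) r := by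
  refine ((hasDerivAt_K hr).div (hasDerivAt_id r) (by positivity)).congr_deriv ?_
  simp only [id_eq]
  ring

lemma strictAntiOn_K_div : StrictAntiOn (fun r => K r / r) (Ioi 1) := by
  refine strictAntiOn_of_hasDerivWithinAt_neg (convex_Ioi 1)
    (fun r hr => (hasDerivAt_K_div hr).continuousAt.continuousWithinAt)
    (fun r hr => (hasDerivAt_K_div (interior_Ioi.subset hr)).hasDerivWithinAt)
    (fun r hr => div_neg_of_neg_of_pos (mul_K'_sub_K_neg (interior_Ioi.subset hr)) ?_)
  have : (1 : ℝ) < r := interior_Ioi.subset hr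
  positivity

theorem K_div_r_strictAnti :
    (∀ r : ℝ, 1 < r →
      r * K' r - K r = -4 * Real.sqrt (r ^ 2 - 1) / r ∧ r * K' r - K r < 0) ∧
    StrictAntiOn (fun r => K r / r) (Set.Ioi (1:ℝ)) ∧
    ∀ lam : ℝ, ∀ r₁ ∈ Set.Ioi (1:ℝ), ∀ r₂ ∈ Set.Ioi (1:ℝ),
      K r₁ = lam * r₁ → K r₂ = lam * r₂ → r₁ = r₂ := by
  refine ⟨fun r hr => ⟨mul_K'_sub_K r, mul_K'_sub_K_neg hr⟩, strictAntiOn_K_div, ?_⟩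
  intro lam r₁ h₁ r₂ h₂ e₁ e₂
  have h₁0 : r₁ ≠ 0 := (zero_lt_one.trans h₁).ne'
  have h₂0 : r₂ ≠ 0 := (zero_lt_one.trans h₂).ne'
  refine strictAntiOn_K_div.injOn h₁ h₂ ?_
  simp only [e₁, e₂, mul_div_cancel_right₀ _ h₁0, mul_div_cancel_right₀ _ h₂0]
end

section
/- Define h : (1,∞) × ℝ × (0,∞) → ℝ³ by h(r, θ₁, r₁) = (h₁, h₂, h₃), where h₁ = 4π r − (24π/(3√3 + 2π))·K(r), h₂ = (√3/3)·sin θ₁ + (3√3/2)·(2√3·π − 3)·cos θ₁ − (√3/9)·r₁, and h₃ = (9√3/(2r₁))·sin θ₁ − (9π/r₁)·sin θ₁ + (√3/(3r₁))·cos θ₁ − (3/2)·(√3 + 2π/3) + 4π. Then h is differentiable at the point (2, π/2, 3) and the determinant of its Jacobian matrix at (2, π/2, 3) is nonzero; hence (2, π/2, 3) is a simple zero of h. -/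
open Real

/-- The averaged function `h = (h₁, h₂, h₃)` of the explicit 4-dimensional example,
in the variables `(r, θ₁, r₁)`. -/
noncomputable def h : (Fin 3 → ℝ) → (Fin 3 → ℝ) := fun x =>
  ![4 * π * x 0 - (24 * π / (3 * Real.sqrt 3 + 2 * π)) * K (x 0),
    Real.sqrt 3 / 3 * Real.sin (x 1) +
      3 * Real.sqrt 3 / 2 * (2 * Real.sqrt 3 * π - 3) * Real.cos (x 1) -
      Real.sqrt 3 / 9 * x 2,
    9 * Real.sqrt 3 / (2 * x 2) * Real.sin (x 1) - 9 * π / x 2 * Real.sin (x 1) +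
      Real.sqrt 3 / (3 * x 2) * Real.cos (x 1) -
      3 / 2 * (Real.sqrt 3 + 2 * π / 3) + 4 * π]

/-!
The first component of `h` depends only on `r` and the other two only on `(θ₁, r₁)`, so the
Jacobian is block diagonal. Since `K'(2) = π/3 − √3/2`, the entry `∂h₁/∂r` at `r = 2` is
`24√3π / (3√3 + 2π) > 0`. Since `(3√3/2)(2√3π − 3) = −A` with
`A = 9√3/2 − 9π`, the `(θ₁, r₁)`-block at `(π/2, 3)` is `[[A, −√3/9], [−√3/9, −A/9]]`, whose
determinant `−(A²/9 + 1/27)` is negative.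
-/

theorem hasDerivAt_K_s17 {r : ℝ} (hr : 1 < r) :
    HasDerivAt K (π - 2 * arctan √(r ^ 2 - 1) - 2 * √(r ^ 2 - 1) / r ^ 2) r := by
  have hr0 : r ≠ 0 := (zero_lt_one.trans hr).ne'
  have hs : 0 < √(r ^ 2 - 1) := sqrt_pos.2 (by nlinarith)
  have hsq : √(r ^ 2 - 1) ^ 2 = r ^ 2 - 1 := sq_sqrt (by nlinarith)
  have hS : HasDerivAt (fun r => √(r ^ 2 - 1)) (r / √(r ^ 2 - 1)) r := by
    convert ((hasDerivAt_pow 2 r).sub_const 1).sqrt (by nlinarith) using 1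
    field_simp
    ring
  have H := (((hasDerivAt_id r).const_mul π).add
    (((hasDerivAt_const r 2).div (hasDerivAt_id r) hr0).mul hS)).sub
    (((hasDerivAt_id r).const_mul 2).mul hS.arctan)
  refine H.congr_deriv ?_
  simp only [id_eq, Pi.div_apply, hsq]
  field_simp
  ring

open ContinuousLinearMap

theorem hasFDerivAt_h_apply_zero {x : Fin 3 → ℝ} {k : ℝ} (hK : HasDerivAt K k (x 0)) :
    HasFDerivAt (fun y => h y 0)
      ((4 * π - 24 * π / (3 * √3 + 2 * π) * k) • proj 0 : (Fin 3 → ℝ) →L[ℝ] ℝ) x := by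
  have H := (((hasDerivAt_id (x 0)).const_mul (4 * π)).sub
    (hK.const_mul (24 * π / (3 * √3 + 2 * π)))).comp_hasFDerivAt x
    (hasFDerivAt_apply (𝕜 := ℝ) 0 x)
  refine H.congr_fderiv ?_
  ext v
  simp

theorem hasFDerivAt_h_apply_one (x : Fin 3 → ℝ) :
    HasFDerivAt (fun y => h y 1)
      ((√3 / 3 * cos (x 1) - 3 * √3 / 2 * (2 * √3 * π - 3) * sin (x 1)) • proj 1 +
        (-(√3 / 9)) • proj 2 : (Fin 3 → ℝ) →L[ℝ] ℝ) x := by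
  have e1 := hasFDerivAt_apply (𝕜 := ℝ) 1 x
  have e2 := hasFDerivAt_apply (𝕜 := ℝ) 2 x
  have H := (((hasDerivAt_sin (x 1)).comp_hasFDerivAt x e1).const_mul (√3 / 3)).add
    (((hasDerivAt_cos (x 1)).comp_hasFDerivAt x e1).const_mul
      (3 * √3 / 2 * (2 * √3 * π - 3))) |>.sub (e2.const_mul (√3 / 9))
  refine H.congr_fderiv ?_
  ext v
  simp only [sub_apply, add_apply, smul_apply, proj_apply, smul_eq_mul, neg_smul, neg_apply]
  ring

theorem hasFDerivAt_h_apply_two {x : Fin 3 → ℝ} (hx : x 2 ≠ 0) :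
    HasFDerivAt (fun y => h y 2)
      ((((9 * √3 / 2 - 9 * π) * cos (x 1) - √3 / 3 * sin (x 1)) / x 2) • proj 1 +
        (-(((9 * √3 / 2 - 9 * π) * sin (x 1) + √3 / 3 * cos (x 1)) / x 2 ^ 2)) • proj 2 :
        (Fin 3 → ℝ) →L[ℝ] ℝ) x := by
  have e1 := hasFDerivAt_apply (𝕜 := ℝ) 1 x
  have e2 := hasFDerivAt_apply (𝕜 := ℝ) 2 x
  have hsin := (hasDerivAt_sin (x 1)).comp_hasFDerivAt x e1
  have hcos := (hasDerivAt_cos (x 1)).comp_hasFDerivAt x e1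
  have u1 := ((hasDerivAt_const (x 2) (9 * √3)).div ((hasDerivAt_id (x 2)).const_mul 2)
    (mul_ne_zero two_ne_zero hx)).comp_hasFDerivAt x e2
  have u2 := ((hasDerivAt_const (x 2) (9 * π)).div (hasDerivAt_id (x 2)) hx).comp_hasFDerivAt x e2
  have u3 := ((hasDerivAt_const (x 2) √3).div ((hasDerivAt_id (x 2)).const_mul 3)
    (mul_ne_zero three_ne_zero hx)).comp_hasFDerivAt x e2
  have H := ((((u1.mul hsin).sub (u2.mul hsin)).add (u3.mul hcos)).sub_const
    (3 / 2 * (√3 + 2 * π / 3))).add_const (4 * π)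
  refine H.congr_fderiv ?_
  ext v
  simp only [Function.comp_apply, Pi.div_apply, id_eq, sub_apply, add_apply, smul_apply,
    proj_apply, smul_eq_mul, neg_smul, neg_apply]
  field_simp
  ring

theorem hasDerivAt_K_two : HasDerivAt K (π / 3 - √3 / 2) 2 :=
  (hasDerivAt_K_s17 one_lt_two).congr_deriv (by norm_num [arctan_sqrt_three]; ring)

theorem hasFDerivAt_h {x : Fin 3 → ℝ} {k : ℝ} (hK : HasDerivAt K k (x 0)) (hx : x 2 ≠ 0) :
    HasFDerivAt h (ContinuousLinearMap.pi ![(4 * π - 24 * π / (3 * √3 + 2 * π) * k) • proj 0,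
      (√3 / 3 * cos (x 1) - 3 * √3 / 2 * (2 * √3 * π - 3) * sin (x 1)) • proj 1 +
        (-(√3 / 9)) • proj 2,
      (((9 * √3 / 2 - 9 * π) * cos (x 1) - √3 / 3 * sin (x 1)) / x 2) • proj 1 +
        (-(((9 * √3 / 2 - 9 * π) * sin (x 1) + √3 / 3 * cos (x 1)) / x 2 ^ 2)) • proj 2] :
      (Fin 3 → ℝ) →L[ℝ] Fin 3 → ℝ) x := by
  refine hasFDerivAt_pi.2 fun i => ?_
  fin_cases i
  exacts [hasFDerivAt_h_apply_zero hK, hasFDerivAt_h_apply_one x, hasFDerivAt_h_apply_two hx]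

theorem det_pi_smul_proj (a b c d e : ℝ) :
    LinearMap.det (ContinuousLinearMap.pi
      ![a • proj 0, b • proj 1 + c • proj 2, d • proj 1 + e • proj 2] :
      (Fin 3 → ℝ) →L[ℝ] Fin 3 → ℝ).toLinearMap = a * (b * e - c * d) := by
  rw [← LinearMap.det_toMatrix', Matrix.det_fin_three]
  simp only [coe_pi, LinearMap.toMatrix'_apply, LinearMap.pi_apply, toLinearMap_add,
    toLinearMap_smul, LinearMap.add_apply, LinearMap.smul_apply, coe_proj, LinearMap.coe_proj,
    Function.eval, Matrix.cons_val, Pi.single_eq_same, Pi.single_eq_of_ne, ne_eq, Fin.reduceEq,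
    not_false_eq_true, smul_eq_mul, mul_one, mul_zero, add_zero, zero_add, zero_mul, sub_zero]
  ring

theorem simple_zero :
    DifferentiableAt ℝ h ![2, π / 2, 3] ∧
    LinearMap.det (fderiv ℝ h ![2, π / 2, 3]).toLinearMap ≠ 0 := by
  have hL := hasFDerivAt_h (x := ![2, π / 2, 3]) hasDerivAt_K_two (by simp)
  refine ⟨hL.differentiableAt, ?_⟩
  rw [hL.fderiv, det_pi_smul_proj]
  simp only [Matrix.cons_val, sin_pi_div_two, cos_pi_div_two, mul_zero, mul_one, zero_sub,
    add_zero]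
  have hs : √3 ^ 2 = 3 := sq_sqrt (by norm_num)
  refine mul_ne_zero (ne_of_gt ?_) (ne_of_lt ?_)
  · calc (0 : ℝ) < 24 * √3 * π / (3 * √3 + 2 * π) := by positivity
      _ = _ := by field_simp; ring
  · calc _ = -((9 * π - 9 * √3 / 2) ^ 2 / 9 + 1 / 27) := by
          linear_combination (3 / 2 * √3 * π - 3 * π ^ 2 - 1 / 81) * hs
      _ < 0 := neg_neg_of_pos (by positivity)
end
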